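/- arXiv:1204.0243 — 4 statements merged into one kernel-verified Lean document; each statement's English description precedes it below -/
import Mathlib

section
/- Let g₁, g₂ : Ω → 𝔻 be nowhere-holomorphic C² functions on an open set Ω ⊆ ℂ satisfying the compatibility condition (CP). Then condition (Ge1) holds on Ω if and only if condition (Ge2) holds on Ω. -/
open Complex ComplexConjugate

/-- Wirtinger derivative `∂h/∂z = ½(∂h/∂u − i ∂h/∂v)` of a map `h : ℂ → ℂ`. -/
noncomputable def wz (h : ℂ → ℂ) (z : ℂ) : ℂ :=
  (1 / 2) * (fderiv ℝ h z 1 - Complex.I * fderiv ℝ h z Complex.I)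

/-- Wirtinger derivative `∂h/∂z̄ = ½(∂h/∂u + i ∂h/∂v)` of a map `h : ℂ → ℂ`. -/
noncomputable def wzb (h : ℂ → ℂ) (z : ℂ) : ℂ :=
  (1 / 2) * (fderiv ℝ h z 1 + Complex.I * fderiv ℝ h z Complex.I)

/-- Wirtinger derivative `∂x/∂z` of a real-valued map `x : ℂ → ℝ`. -/
noncomputable def wzR (x : ℂ → ℝ) (z : ℂ) : ℂ :=
  (1 / 2) * (((fderiv ℝ x z 1 : ℝ) : ℂ) - Complex.I * ((fderiv ℝ x z Complex.I : ℝ) : ℂ))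

/-- The function `F` appearing in the compatibility condition (CP). -/
noncomputable def Ffun (g₁ g₂ : ℂ → ℂ) (z : ℂ) : ℂ :=
  wzb g₁ z / ((1 - g₁ z * conj (g₂ z)) * (1 + (Complex.normSq (g₁ z) : ℂ)))

/-- The compatibility condition (CP) at a point `z`. -/
def CP (g₁ g₂ : ℂ → ℂ) (z : ℂ) : Prop :=
  Ffun g₁ g₂ z = wzb g₂ z / ((1 - conj (g₁ z) * g₂ z) * (1 + (Complex.normSq (g₂ z) : ℂ)))

/-- The integrability condition (Ge1) at a point `z`. -/
def Ge1 (g₁ g₂ : ℂ → ℂ) (z : ℂ) : Prop :=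
  0 = wz (wzb g₁) z
      + (conj (g₂ z) / (1 - g₁ z * conj (g₂ z))
          - conj (g₁ z) / (1 + (Complex.normSq (g₁ z) : ℂ))) * wz g₁ z * wzb g₁ z
      + ((g₁ z + g₂ z) / ((1 - conj (g₁ z) * g₂ z) * (1 + (Complex.normSq (g₁ z) : ℂ))))
          * (Complex.normSq (wzb g₁ z) : ℂ)

/-- The integrability condition (Ge2) at a point `z`. -/
def Ge2 (g₁ g₂ : ℂ → ℂ) (z : ℂ) : Prop :=
  0 = wz (wzb g₂) z
      + (conj (g₁ z) / (1 - conj (g₁ z) * g₂ z)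
          - conj (g₂ z) / (1 + (Complex.normSq (g₂ z) : ℂ))) * wz g₂ z * wzb g₂ z
      + ((g₁ z + g₂ z) / ((1 - g₁ z * conj (g₂ z)) * (1 + (Complex.normSq (g₂ z) : ℂ))))
          * (Complex.normSq (wzb g₂ z) : ℂ)

/-! With `F = Ffun g₁ g₂ = (g₁)_z̄ / ((1 - g₁ ḡ₂)(1 + |g₁|²))`, the quotient rule for `∂_z`
together with (CP) and its complex conjugate (which eliminate `conj (g₂)_z̄` and `conj (g₁)_z̄`)
shows that the right-hand side of (Ge1) equals `(1 - g₁ ḡ₂)(1 + |g₁|²)` times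
`∂_z F + |F|² (g₁ + g₂ - g₁ g₂ (ḡ₁ + ḡ₂))`.
Swapping `g₁` and `g₂` turns (Ge2) into (Ge1), and by (CP) it does not change `F` on the open
set `Ω`, hence neither `∂_z F`; as the bracket is symmetric, both conditions say that it vanishes. -/

open Filter Topology

section Wirtinger

variable {f g : ℂ → ℂ} {z : ℂ}

theorem wz_congr (h : f =ᶠ[𝓝 z] g) : wz f z = wz g z := by
  rw [wz, wz, h.fderiv_eq]

theorem wz_const (c : ℂ) : wz (fun _ => c) z = 0 := by
  simp [wz]

theorem wz_fun_add (hf : DifferentiableAt ℝ f z) (hg : DifferentiableAt ℝ g z) :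
    wz (fun y => f y + g y) z = wz f z + wz g z := by
  simp only [wz, fderiv_fun_add hf hg, add_apply]
  ring

theorem wz_fun_sub (hf : DifferentiableAt ℝ f z) (hg : DifferentiableAt ℝ g z) :
    wz (fun y => f y - g y) z = wz f z - wz g z := by
  simp only [wz, fderiv_fun_sub hf hg, sub_apply]
  ring

theorem wz_fun_mul (hf : DifferentiableAt ℝ f z) (hg : DifferentiableAt ℝ g z) :
    wz (fun y => f y * g y) z = wz f z * g z + f z * wz g z := by
  simp only [wz, fderiv_fun_mul hf hg, add_apply, smul_apply, smul_eq_mul]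
  ring

theorem wz_fun_inv (hf : DifferentiableAt ℝ f z) (h0 : f z ≠ 0) :
    wz (fun y => (f y)⁻¹) z = -wz f z / f z ^ 2 := by
  have : fderiv ℝ (fun y => (f y)⁻¹) z = (fderiv ℝ Inv.inv (f z)).comp (fderiv ℝ f z) :=
    fderiv_comp z (differentiableAt_inv h0) hf
  simp only [wz, this, fderiv_inv' h0, ContinuousLinearMap.comp_apply,
    neg_apply, ContinuousLinearMap.mulLeftRight_apply]
  field_simp
  ring

theorem wz_fun_div (hf : DifferentiableAt ℝ f z) (hg : DifferentiableAt ℝ g z) (h0 : g z ≠ 0) :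
    wz (fun y => f y / g y) z = (wz f z * g z - f z * wz g z) / g z ^ 2 := by
  simp only [div_eq_mul_inv]
  rw [wz_fun_mul hf (hg.fun_inv h0), wz_fun_inv hg h0]
  field_simp
  ring

theorem wz_conj : wz (fun y => conj (f y)) z = conj (wzb f z) := by
  have : (fun y => conj (f y)) = fun y => star (f y) := rfl
  simp only [wz, wzb, this, fderiv_star, ContinuousLinearMap.comp_apply]
  simp only [ContinuousLinearEquiv.coe_coe, starL'_apply, RCLike.star_def, map_mul, map_add,
    map_div₀, map_one, map_ofNat, conj_I]
  ring

theorem differentiableAt_wzb (hf : ContDiffAt ℝ 2 f z) : DifferentiableAt ℝ (wzb f) z := by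
  have h : ContDiffAt ℝ 1 (fderiv ℝ f) z := hf.fderiv_right (by norm_num)
  have happly (v : ℂ) : DifferentiableAt ℝ (fun y => fderiv ℝ f y v) z :=
    (h.clm_apply contDiffAt_const).differentiableAt one_ne_zero
  unfold wzb
  fun_prop

end Wirtinger

theorem one_add_normSq_ne_zero (w : ℂ) : 1 + (normSq w : ℂ) ≠ 0 := by
  exact_mod_cast (by linarith [normSq_nonneg w] : (0 : ℝ) < 1 + normSq w).ne'

theorem one_sub_mul_conj_ne_zero {x y : ℂ} (hx : ‖x‖ < 1) (hy : ‖y‖ < 1) :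
    1 - x * conj y ≠ 0 := by
  refine sub_ne_zero.2 (ne_of_apply_ne norm ?_)
  rw [norm_one, norm_mul, Complex.norm_conj]
  exact (mul_lt_one_of_nonneg_of_lt_one_left (norm_nonneg x) hx hy.le).ne'

section Compatibility

variable {g₁ g₂ : ℂ → ℂ} {z : ℂ}

theorem wz_Ffun_mul (h₁ : DifferentiableAt ℝ g₁ z) (h₂ : DifferentiableAt ℝ g₂ z)
    (hA : DifferentiableAt ℝ (wzb g₁) z) (hB : 1 - g₁ z * conj (g₂ z) ≠ 0) :
    wz (Ffun g₁ g₂) z * ((1 - g₁ z * conj (g₂ z)) * (1 + normSq (g₁ z))) =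
      wz (wzb g₁) z + Ffun g₁ g₂ z *
        ((wz g₁ z * conj (g₂ z) + g₁ z * conj (wzb g₂ z)) * (1 + normSq (g₁ z))
          - (1 - g₁ z * conj (g₂ z)) * (wz g₁ z * conj (g₁ z) + g₁ z * conj (wzb g₁ z))) := by
  have hF : Ffun g₁ g₂ =
      fun y => wzb g₁ y / ((1 - g₁ y * conj (g₂ y)) * (1 + g₁ y * conj (g₁ y))) := by
    funext y
    rw [Ffun, mul_conj]
  have hC := one_add_normSq_ne_zero (g₁ z)
  have hc₁ : DifferentiableAt ℝ (fun y => conj (g₁ y)) z := h₁.star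
  have hc₂ : DifferentiableAt ℝ (fun y => conj (g₂ y)) z := h₂.star
  rw [hF, wz_fun_div hA (by fun_prop) (by rw [mul_conj]; exact mul_ne_zero hB hC),
    wz_fun_mul (by fun_prop) (by fun_prop), wz_fun_sub (by fun_prop) (by fun_prop),
    wz_fun_add (by fun_prop) (by fun_prop), wz_fun_mul h₁ hc₂, wz_fun_mul h₁ hc₁, wz_const,
    wz_conj, wz_conj]
  simp only [mul_conj]
  field_simp
  ring

theorem Ge1_iff_of_CP (h₁ : DifferentiableAt ℝ g₁ z) (h₂ : DifferentiableAt ℝ g₂ z)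
    (hA : DifferentiableAt ℝ (wzb g₁) z) (hB : 1 - g₁ z * conj (g₂ z) ≠ 0) (hcp : CP g₁ g₂ z) :
    Ge1 g₁ g₂ z ↔ wz (Ffun g₁ g₂) z
      + normSq (Ffun g₁ g₂ z) * (g₁ z + g₂ z - g₁ z * g₂ z * conj (g₁ z + g₂ z)) = 0 := by
  have hB' : 1 - conj (g₁ z) * g₂ z ≠ 0 := by
    simpa [mul_comm] using (map_ne_zero (starRingEnd ℂ)).2 hB
  have hC := one_add_normSq_ne_zero (g₁ z)
  have hD := one_add_normSq_ne_zero (g₂ z)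
  have hW := wz_Ffun_mul h₁ h₂ hA hB
  have ha : wzb g₁ z = Ffun g₁ g₂ z * ((1 - g₁ z * conj (g₂ z)) * (1 + normSq (g₁ z))) := by
    rw [Ffun, div_mul_cancel₀ _ (mul_ne_zero hB hC)]
  have hb : wzb g₂ z = Ffun g₁ g₂ z * ((1 - conj (g₁ z) * g₂ z) * (1 + normSq (g₂ z))) := by
    rw [show Ffun g₁ g₂ z = _ from hcp, div_mul_cancel₀ _ (mul_ne_zero hB' hD)]
  set F := Ffun g₁ g₂ z
  have ha' : conj (wzb g₁ z) = conj F * ((1 - conj (g₁ z) * g₂ z) * (1 + normSq (g₁ z))) := by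
    simp [ha, mul_comm]
  have hb' : conj (wzb g₂ z) = conj F * ((1 - g₁ z * conj (g₂ z)) * (1 + normSq (g₂ z))) := by
    simp [hb, mul_comm]
  rw [Ge1, eq_comm]
  conv_rhs => rw [← mul_eq_zero_iff_left (mul_ne_zero hB hC)]
  apply iff_of_eq
  congr 1
  rw [← mul_conj (wzb g₁ z), ← mul_conj F, ha', ha]
  rw [hb', ha'] at hW
  have hB2 : 1 - conj (g₂ z) * g₁ z ≠ 0 := by rwa [mul_comm]
  simp only [← mul_conj, map_add] at hW hC ⊢
  field_simp
  linear_combination -hW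

theorem CP_iff : CP g₁ g₂ z ↔ Ffun g₁ g₂ z = Ffun g₂ g₁ z := by
  unfold CP Ffun
  rw [mul_comm (g₂ z)]

theorem CP.symm (h : CP g₁ g₂ z) : CP g₂ g₁ z :=
  CP_iff.2 (CP_iff.1 h).symm

theorem Ge2_iff_Ge1_swap : Ge2 g₁ g₂ z ↔ Ge1 g₂ g₁ z := by
  rw [Ge1, Ge2, mul_comm (g₂ z), mul_comm (conj (g₂ z)), add_comm (g₂ z)]

end Compatibility

theorem Ge1_iff_Ge2_general
    (Ω : Set ℂ) (hΩ : IsOpen Ω) (g₁ g₂ : ℂ → ℂ)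
    (hg₁ : ContDiffOn ℝ 2 g₁ Ω) (hg₂ : ContDiffOn ℝ 2 g₂ Ω)
    (hd₁ : ∀ z ∈ Ω, ‖g₁ z‖ < 1) (hd₂ : ∀ z ∈ Ω, ‖g₂ z‖ < 1)
    (hCP : ∀ z ∈ Ω, CP g₁ g₂ z) :
    (∀ z ∈ Ω, Ge1 g₁ g₂ z) ↔ (∀ z ∈ Ω, Ge2 g₁ g₂ z) := by
  refine forall₂_congr fun z hz => ?_
  have hU := hΩ.mem_nhds hz
  have hc₁ := hg₁.contDiffAt hU
  have hc₂ := hg₂.contDiffAt hU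
  have hF : Ffun g₂ g₁ =ᶠ[𝓝 z] Ffun g₁ g₂ :=
    eventually_of_mem hU fun y hy => (CP_iff.1 (hCP y hy)).symm
  rw [Ge2_iff_Ge1_swap,
    Ge1_iff_of_CP (hc₁.differentiableAt two_ne_zero) (hc₂.differentiableAt two_ne_zero)
      (differentiableAt_wzb hc₁) (one_sub_mul_conj_ne_zero (hd₁ z hz) (hd₂ z hz)) (hCP z hz),
    Ge1_iff_of_CP (hc₂.differentiableAt two_ne_zero) (hc₁.differentiableAt two_ne_zero)
      (differentiableAt_wzb hc₂) (one_sub_mul_conj_ne_zero (hd₂ z hz) (hd₁ z hz)) (hCP z hz).symm,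
    wz_congr hF, hF.eq_of_nhds, add_comm (g₂ z), mul_comm (g₂ z)]

/-- **(Theorem, part (a)).** For nowhere-holomorphic `C²` maps `g₁, g₂ : Ω → 𝔻`
satisfying the compatibility condition (CP), the integrability condition (Ge1) holds
on `Ω` if and only if (Ge2) holds on `Ω`. -/
theorem Ge1_iff_Ge2
    (Ω : Set ℂ) (hΩ : IsOpen Ω) (g₁ g₂ : ℂ → ℂ)
    (hg₁ : ContDiffOn ℝ 2 g₁ Ω) (hg₂ : ContDiffOn ℝ 2 g₂ Ω)
    (hd₁ : ∀ z ∈ Ω, ‖g₁ z‖ < 1) (hd₂ : ∀ z ∈ Ω, ‖g₂ z‖ < 1)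
    (hnh₁ : ∀ z ∈ Ω, wzb g₁ z ≠ 0) (hnh₂ : ∀ z ∈ Ω, wzb g₂ z ≠ 0)
    (hCP : ∀ z ∈ Ω, CP g₁ g₂ z) :
    (∀ z ∈ Ω, Ge1 g₁ g₂ z) ↔ (∀ z ∈ Ω, Ge2 g₁ g₂ z) :=
  Ge1_iff_Ge2_general Ω hΩ g₁ g₂ hg₁ hg₂ hd₁ hd₂ hCP
end

section
/- The real-valued function G : ℂ → 𝔻 defined by G(u + iv) := tanh u satisfies the translator equation (Gauss): G_{zz̄} + 2·(conj(G)|G|²/(1 − |G|⁴))·G_z·G_z̄ + 2·(G/(1 − |G|⁴))·|G_z̄|² = 0 at every point of ℂ, and G_z̄ never vanishes. -/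
open Complex ComplexConjugate

/-- The translator equation (Gauss) for `G : Ω → 𝔻`:
`G_{zz̄} + 2(conj(G)|G|²/(1 − |G|⁴))·G_z·G_z̄ + 2(G/(1 − |G|⁴))·|G_z̄|² = 0`. -/
def GaussEq (G : ℂ → ℂ) (z : ℂ) : Prop :=
  wz (wzb G) z
    + 2 * (conj (G z) * (Complex.normSq (G z) : ℂ)
        / (1 - (Complex.normSq (G z) : ℂ) ^ 2)) * wz G z * wzb G z
    + 2 * (G z / (1 - (Complex.normSq (G z) : ℂ) ^ 2)) * (Complex.normSq (wzb G z) : ℂ) = 0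

/-- The null curve `φ = (2·conj(G)_z/(|G|⁴ − 1))·(1 − G², i(1 + G²), 2G)` in `ℂ³`. -/
noncomputable def phi3 (G : ℂ → ℂ) (z : ℂ) : Fin 3 → ℂ :=
  ![(2 * wz (fun w => conj (G w)) z / ((Complex.normSq (G z) : ℂ) ^ 2 - 1)) * (1 - (G z) ^ 2),
    (2 * wz (fun w => conj (G w)) z / ((Complex.normSq (G z) : ℂ) ^ 2 - 1))
      * (Complex.I * (1 + (G z) ^ 2)),
    (2 * wz (fun w => conj (G w)) z / ((Complex.normSq (G z) : ℂ) ^ 2 - 1)) * (2 * G z)]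

/-! `G = tanh ∘ re` depends on `u` only, so `G_z = G_z̄ = tanh'(u)/2` and
`G_{zz̄} = tanh''(u)/4`. For any real `f(u)` with `f² ≠ 1`, multiplying (Gauss) by `4(1 - f⁴)`
turns it into `(1 + f²)(f''(1 - f²) + 2 f f'²) = 0`, and `tanh' = 1 - tanh²` solves
`f''(1 - f²) + 2 f f'² = 0`. -/

lemma hasDerivAt_tanh (x : ℝ) : HasDerivAt Real.tanh (1 - Real.tanh x ^ 2) x := by
  have hcosh : Real.cosh x ≠ 0 := (Real.cosh_pos x).ne'
  have hsinh_div_cosh : Real.sinh / Real.cosh = Real.tanh :=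
    funext fun y => (Real.tanh_eq_sinh_div_cosh y).symm
  have h := (Real.hasDerivAt_sinh x).div (Real.hasDerivAt_cosh x) hcosh
  rw [hsinh_div_cosh] at h
  refine h.congr_deriv ?_
  rw [Real.tanh_eq_sinh_div_cosh]
  field_simp

lemma hasDerivAt_one_sub_tanh_sq (x : ℝ) :
    HasDerivAt (fun y => 1 - Real.tanh y ^ 2) (-2 * Real.tanh x * (1 - Real.tanh x ^ 2)) x := by
  refine (((hasDerivAt_tanh x).fun_pow 2).const_sub 1).congr_deriv ?_
  ring

section ComplexOfReal

variable {f : ℝ → ℝ} {d : ℝ} {z : ℂ}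

lemma hasFDerivAt_ofReal_comp_re (h : HasDerivAt f d z.re) :
    HasFDerivAt (fun w : ℂ => (f w.re : ℂ)) (d • ofRealCLM.comp reCLM) z := by
  have hcomp : HasFDerivAt (fun w : ℂ => (f w.re : ℂ))
      (ofRealCLM.comp ((ContinuousLinearMap.toSpanSingleton ℝ d).comp reCLM)) z :=
    ofRealCLM.hasFDerivAt.comp z (h.hasFDerivAt.comp z reCLM.hasFDerivAt)
  convert hcomp using 1
  ext w
  simp [mul_comm]

lemma wz_ofReal_comp_re (h : HasDerivAt f d z.re) :
    wz (fun w : ℂ => (f w.re : ℂ)) z = d / 2 := by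
  simp [wz, (hasFDerivAt_ofReal_comp_re h).fderiv, div_eq_inv_mul]

lemma wzb_ofReal_comp_re (h : HasDerivAt f d z.re) :
    wzb (fun w : ℂ => (f w.re : ℂ)) z = d / 2 := by
  simp [wzb, (hasFDerivAt_ofReal_comp_re h).fderiv, div_eq_inv_mul]

end ComplexOfReal

lemma gaussEq_ofReal_comp_re {f f' : ℝ → ℝ} {f'' : ℝ} {z : ℂ}
    (hf : ∀ x, HasDerivAt f (f' x) x) (hf' : HasDerivAt f' f'' z.re)
    (hf_sq : f z.re ^ 2 ≠ 1)
    (hode : f'' * (1 - f z.re ^ 2) + 2 * f z.re * f' z.re ^ 2 = 0) :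
    GaussEq (fun w => (f w.re : ℂ)) z := by
  have hwzb : wzb (fun w => (f w.re : ℂ)) = fun w => ((f' w.re / 2 : ℝ) : ℂ) := by
    funext w
    rw [wzb_ofReal_comp_re (hf w.re)]
    push_cast
    ring
  have hden : (1 : ℂ) - (f z.re : ℂ) ^ 4 ≠ 0 := by
    have hden_real : (1 : ℝ) - f z.re ^ 4 ≠ 0 := fun h =>
      hf_sq (by nlinarith [sq_nonneg (f z.re)])
    exact_mod_cast hden_real
  have hode' : (f'' : ℂ) * (1 - (f z.re : ℂ) ^ 2) + 2 * f z.re * (f' z.re : ℂ) ^ 2 = 0 := by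
    exact_mod_cast hode
  unfold GaussEq
  rw [hwzb, wz_ofReal_comp_re (hf'.div_const 2), wz_ofReal_comp_re (hf z.re)]
  simp only [normSq_ofReal, conj_ofReal]
  push_cast
  field_simp
  linear_combination (1 + (f z.re : ℂ) ^ 2) * hode'

/-- **(Grim reaper cylinder data).** The function `G(u + iv) = tanh u` maps `ℂ` into the
open unit disc, satisfies the translator equation (Gauss) everywhere, and is nowhere
holomorphic (`G_z̄` never vanishes). -/
theorem tanh_solves_gauss :
    (∀ z : ℂ, ‖((Real.tanh z.re : ℝ) : ℂ)‖ < 1)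
    ∧ (∀ z : ℂ, GaussEq (fun w => ((Real.tanh w.re : ℝ) : ℂ)) z)
    ∧ (∀ z : ℂ, wzb (fun w => ((Real.tanh w.re : ℝ) : ℂ)) z ≠ 0) := by
  refine ⟨fun z => ?_, fun z => ?_, fun z => ?_⟩
  · rw [norm_real, Real.norm_eq_abs]
    exact Real.abs_tanh_lt_one z.re
  · exact gaussEq_ofReal_comp_re hasDerivAt_tanh (hasDerivAt_one_sub_tanh_sq z.re)
      (Real.tanh_sq_lt_one z.re).ne (by ring)
  · rw [wzb_ofReal_comp_re (hasDerivAt_tanh z.re)]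
    have hsech_sq : 1 - Real.tanh z.re ^ 2 ≠ 0 := by linarith [Real.tanh_sq_lt_one z.re]
    exact div_ne_zero (ofReal_ne_zero.mpr hsech_sq) two_ne_zero
end

section
/- For any constant θ ∈ ℝ, the function G : ℂ → 𝔻 defined by G(u + iv) := (cosh θ · sinh(2u) + i·sinh θ)/(1 + cosh θ · cosh(2u)) takes values in the open unit disc and satisfies the translator equation (Gauss): G_{zz̄} + 2·(conj(G)|G|²/(1 − |G|⁴))·G_z·G_z̄ + 2·(G/(1 − |G|⁴))·|G_z̄|² = 0 at every point of ℂ. -/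
open Complex ComplexConjugate

/-!
`G` depends only on `u = Re z`, so `G_z = G_z̄ = g'/2` for `g(u) = G(u)`. This `g` solves the
Riccati equation `g' = 1 - g²` (it is `tanh (u + iα)` with `cos 2α = sech θ`, `sin 2α = tanh θ`),
hence `G_{zz̄} = -g (1 - g²)/2` and the Gauss equation reduces to a polynomial identity in `g`
and `ḡ`. Moreover `|g|² = (cosh θ cosh 2u - 1)/(cosh θ cosh 2u + 1) < 1`.
-/

section FunctionOfRe

variable {h : ℝ → ℂ} {d z : ℂ}

lemma HasDerivAt.fderiv_comp_re_apply (hd : HasDerivAt h d z.re) (c : ℂ) :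
    fderiv ℝ (fun w : ℂ => h w.re) z c = c.re • d := by
  rw [show (fun w : ℂ => h w.re) = h ∘ re from rfl,
    (hd.hasFDerivAt.comp z reCLM.hasFDerivAt).fderiv]
  simp

lemma HasDerivAt.wz_comp_re (hd : HasDerivAt h d z.re) : wz (fun w => h w.re) z = d / 2 := by
  simp only [wz, hd.fderiv_comp_re_apply, one_re, I_re, one_smul, zero_smul, mul_zero, sub_zero]
  ring

lemma HasDerivAt.wzb_comp_re (hd : HasDerivAt h d z.re) : wzb (fun w => h w.re) z = d / 2 := by
  simp only [wzb, hd.fderiv_comp_re_apply, one_re, I_re, one_smul, zero_smul, mul_zero, add_zero]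
  ring

end FunctionOfRe

theorem gaussEq_comp_re_of_riccati {g : ℝ → ℂ} (hg : ∀ u, HasDerivAt g (1 - g u ^ 2) u)
    (z : ℂ) (hz : ‖g z.re‖ ≠ 1) : GaussEq (fun w => g w.re) z := by
  have hwzb : wzb (fun w => g w.re) = fun w => (1 - g w.re ^ 2) / 2 :=
    funext fun w => (hg w.re).wzb_comp_re
  have hwzwzb : wz (fun w => (1 - g w.re ^ 2) / 2) z = -(g z.re * (1 - g z.re ^ 2)) / 2 :=
    HasDerivAt.wz_comp_re (h := fun u => (1 - g u ^ 2) / 2)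
      ((((hg z.re).fun_pow 2).const_sub 1).div_const 2 |>.congr_deriv (by push_cast; ring))
  have hN : (1 : ℂ) - g z.re ^ 2 * conj (g z.re) ^ 2 ≠ 0 := by
    rw [← mul_pow, mul_conj, ← Complex.sq_norm, sub_ne_zero, ne_comm]
    norm_cast
    rw [← pow_mul]
    exact (pow_eq_one_iff_of_nonneg (norm_nonneg _) (by norm_num)).not.2 hz
  simp only [GaussEq, hwzb, hwzwzb, (hg z.re).wz_comp_re]
  simp only [← mul_conj]
  simp only [map_div₀, map_sub, map_one, map_pow, map_ofNat]
  field_simp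
  ring

noncomputable def grimReaperGauss (θ u : ℝ) : ℂ :=
  (((Real.cosh θ * Real.sinh (2 * u) : ℝ) : ℂ) + Complex.I * ((Real.sinh θ : ℝ) : ℂ))
    / (1 + ((Real.cosh θ * Real.cosh (2 * u) : ℝ) : ℂ))

lemma hasDerivAt_grimReaperGauss (θ u : ℝ) :
    HasDerivAt (grimReaperGauss θ) (1 - grimReaperGauss θ u ^ 2) u := by
  have h2u := (hasDerivAt_id' u).const_mul (2 : ℝ)
  have hnum := ((h2u.sinh.const_mul (Real.cosh θ)).ofReal_comp).add_const
    (Complex.I * ((Real.sinh θ : ℝ) : ℂ))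
  have hden := ((h2u.cosh.const_mul (Real.cosh θ)).ofReal_comp).const_add 1
  have hD : 1 + ((Real.cosh θ * Real.cosh (2 * u) : ℝ) : ℂ) ≠ 0 := by
    exact_mod_cast (by positivity : (0 : ℝ) < 1 + Real.cosh θ * Real.cosh (2 * u)).ne'
  refine (hnum.div hden hD).congr_deriv ?_
  rw [grimReaperGauss]
  push_cast at hD ⊢
  field_simp
  linear_combination Complex.cosh θ ^ 2 * Complex.cosh_sq_sub_sinh_sq (2 * (u : ℂ))
    + Complex.cosh_sq_sub_sinh_sq (θ : ℂ) + Complex.sinh θ ^ 2 * I_sq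

lemma norm_grimReaperGauss_lt_one (θ u : ℝ) : ‖grimReaperGauss θ u‖ < 1 := by
  have hq : 0 < Real.cosh θ * Real.cosh (2 * u) := by positivity
  have hD : 1 + ((Real.cosh θ * Real.cosh (2 * u) : ℝ) : ℂ)
      = ((1 + Real.cosh θ * Real.cosh (2 * u) : ℝ) : ℂ) := by push_cast; ring
  rw [grimReaperGauss, norm_div, hD, Complex.norm_real, Real.norm_of_nonneg (by positivity),
    div_lt_one (by positivity), ← sq_lt_sq₀ (norm_nonneg _) (by positivity), Complex.sq_norm,
    mul_comm I, normSq_add_mul_I]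
  nlinarith [Real.cosh_sq_sub_sinh_sq θ, Real.cosh_sq_sub_sinh_sq (2 * u)]

/-- **(Deformations of the grim reaper cylinder: Gauss map).** For every `θ ∈ ℝ`, the
function `G(u + iv) = (cosh θ sinh(2u) + i sinh θ)/(1 + cosh θ cosh(2u))` takes values
in the open unit disc and satisfies the translator equation (Gauss) on all of `ℂ`. -/
theorem deformed_grim_reaper_gauss (θ : ℝ) :
    (∀ z : ℂ,
      ‖(((Real.cosh θ * Real.sinh (2 * z.re) : ℝ) : ℂ)
          + Complex.I * ((Real.sinh θ : ℝ) : ℂ))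
        / (1 + ((Real.cosh θ * Real.cosh (2 * z.re) : ℝ) : ℂ))‖ < 1)
    ∧ (∀ z : ℂ,
      GaussEq (fun w =>
        ((((Real.cosh θ * Real.sinh (2 * w.re) : ℝ) : ℂ)
            + Complex.I * ((Real.sinh θ : ℝ) : ℂ))
          / (1 + ((Real.cosh θ * Real.cosh (2 * w.re) : ℝ) : ℂ)))) z) :=
  ⟨fun z => norm_grimReaperGauss_lt_one θ z.re, fun z =>
    gaussEq_comp_re_of_riccati (hasDerivAt_grimReaperGauss θ) z
      (norm_grimReaperGauss_lt_one θ z.re).ne⟩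
end

section
/- On the domain Ω := {z = u + iv ∈ ℂ : u > 1}, the pair of ℂ-valued functions g₁(u + iv) := e^{iv} and g₂(u + iv) := ((u + 1)/(u − 1))·e^{iv} satisfies both the compatibility condition (CP): (g₁)_z̄ / [(1 − g₁·conj(g₂))(1 + |g₁|²)] = (g₂)_z̄ / [(1 − conj(g₁)·g₂)(1 + |g₂|²)], and the integrability condition (Ge1): 0 = (g₁)_{zz̄} + (conj(g₂)/(1 − g₁·conj(g₂)) − conj(g₁)/(1 + |g₁|²))·(g₁)_z·(g₁)_z̄ + ((g₁+g₂)/[(1 − conj(g₁)·g₂)(1 + |g₁|²)])·|(g₁)_z̄|². In particular, the real function 𝒢(u) := (u + 1)/(u − 1) solves the ordinary differential equation 1/2 = (𝒢 − 𝒢′)/(1 + 𝒢²) for u > 1. -/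
open Complex ComplexConjugate

/-! For a map of the form `a(u) e^{iv}` the Wirtinger derivatives are `((a' ± a)/2) e^{iv}`.
Since `|e^{iv}| = 1`, for `g₁ = e^{iv}` and `g₂ = 𝒢(u) e^{iv}` with `𝒢` real, condition (CP) reduces
to the ODE `𝒢' = 𝒢 − (1 + 𝒢²)/2`, which `(u + 1)/(u − 1)` satisfies, while (Ge1) reduces to an
algebraic identity that holds whenever `𝒢 ≠ 1`. -/

lemma hasFDerivAt_mul_exp_I_im {a : ℝ → ℂ} {a' : ℂ} {z : ℂ} (ha : HasDerivAt a a' z.re) :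
    HasFDerivAt (fun w : ℂ => a w.re * exp (I * w.im))
      ((a' * exp (I * z.im)) • (ofRealCLM ∘L reCLM)
        + (I * a z.re * exp (I * z.im)) • (ofRealCLM ∘L imCLM)) z := by
  have hexp : HasDerivAt (fun t : ℝ => exp (I * t)) (exp (I * z.im) * I) z.im := by
    simpa using ((hasDerivAt_id (z.im : ℂ)).const_mul I).cexp.comp_ofReal
  refine ((ha.hasFDerivAt.comp z reCLM.hasFDerivAt).mul
    (hexp.hasFDerivAt.comp z imCLM.hasFDerivAt)).congr_fderiv ?_
  ext v
  simp only [Function.comp_apply, add_apply, smul_apply, ContinuousLinearMap.comp_apply,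
    ContinuousLinearMap.toSpanSingleton_apply, real_smul, smul_eq_mul, reCLM_apply, imCLM_apply,
    ofRealCLM_apply]
  ring

lemma fderiv_mul_exp_I_im_apply {a : ℝ → ℂ} {a' : ℂ} {z : ℂ} (ha : HasDerivAt a a' z.re)
    (v : ℂ) : fderiv ℝ (fun w : ℂ => a w.re * exp (I * w.im)) z v
      = (a' * v.re + I * a z.re * v.im) * exp (I * z.im) := by
  rw [(hasFDerivAt_mul_exp_I_im ha).fderiv]
  simp only [add_apply, smul_apply,
    ContinuousLinearMap.comp_apply, reCLM_apply, imCLM_apply, ofRealCLM_apply, smul_eq_mul]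
  ring

lemma wz_mul_exp_I_im {a : ℝ → ℂ} {a' : ℂ} {z : ℂ} (ha : HasDerivAt a a' z.re) :
    wz (fun w : ℂ => a w.re * exp (I * w.im)) z = (a' + a z.re) / 2 * exp (I * z.im) := by
  simp only [wz, fderiv_mul_exp_I_im_apply ha, one_re, one_im, I_re, I_im, ofReal_one, ofReal_zero]
  linear_combination (-(a z.re * exp (I * z.im)) / 2) * I_sq

lemma wzb_mul_exp_I_im {a : ℝ → ℂ} {a' : ℂ} {z : ℂ} (ha : HasDerivAt a a' z.re) :
    wzb (fun w : ℂ => a w.re * exp (I * w.im)) z = (a' - a z.re) / 2 * exp (I * z.im) := by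
  simp only [wzb, fderiv_mul_exp_I_im_apply ha, one_re, one_im, I_re, I_im, ofReal_one, ofReal_zero]
  linear_combination (a z.re * exp (I * z.im) / 2) * I_sq

lemma wz_exp_I_im (z : ℂ) : wz (fun w : ℂ => exp (I * w.im)) z = exp (I * z.im) / 2 := by
  convert wz_mul_exp_I_im (a := fun _ => 1) (hasDerivAt_const z.re _) using 1
  · simp only [one_mul]
  · ring

lemma wzb_exp_I_im (z : ℂ) : wzb (fun w : ℂ => exp (I * w.im)) z = -exp (I * z.im) / 2 := by
  convert wzb_mul_exp_I_im (a := fun _ => 1) (hasDerivAt_const z.re _) using 1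
  · simp only [one_mul]
  · ring

lemma wz_wzb_exp_I_im (z : ℂ) :
    wz (wzb fun w : ℂ => exp (I * w.im)) z = -exp (I * z.im) / 4 := by
  have hwzb : wzb (fun w : ℂ => exp (I * w.im))
      = fun w => (fun _ : ℝ => (-1 / 2 : ℂ)) w.re * exp (I * w.im) := by
    ext w; rw [wzb_exp_I_im]; ring
  rw [hwzb, wz_mul_exp_I_im (hasDerivAt_const _ _)]
  ring

lemma hasDerivAt_add_one_div_sub_one {u : ℝ} (hu : u ≠ 1) :
    HasDerivAt (fun t : ℝ => (t + 1) / (t - 1))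
      ((u + 1) / (u - 1) - (1 + ((u + 1) / (u - 1)) ^ 2) / 2) u := by
  have hu' : u - 1 ≠ 0 := sub_ne_zero.mpr hu
  refine (((hasDerivAt_id u).add_const 1).div ((hasDerivAt_id u).sub_const 1) hu').congr_deriv ?_
  simp only [id]
  field_simp
  ring

lemma normSq_exp_I_mul (v : ℝ) : normSq (exp (I * v)) = 1 := by
  rw [normSq_eq_norm_sq, mul_comm, norm_exp_ofReal_mul_I, one_pow]

lemma exp_I_mul_mul_conj (v : ℝ) (c : ℂ) : exp (I * v) * (c * conj (exp (I * v))) = c := by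
  rw [mul_left_comm, mul_conj, normSq_exp_I_mul, ofReal_one, mul_one]

lemma conj_exp_I_mul_mul (v : ℝ) (c : ℂ) : conj (exp (I * v)) * (c * exp (I * v)) = c := by
  rw [mul_left_comm, mul_comm (conj _), mul_conj, normSq_exp_I_mul, ofReal_one, mul_one]

lemma CP_exp_I_im_of_hasDerivAt {c : ℝ → ℝ} {z : ℂ}
    (hc : HasDerivAt c (c z.re - (1 + c z.re ^ 2) / 2) z.re) :
    CP (fun w => exp (I * w.im)) (fun w => (c w.re : ℂ) * exp (I * w.im)) z := by
  have hpos : (1 : ℂ) + c z.re * c z.re ≠ 0 := by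
    exact_mod_cast (add_pos_of_pos_of_nonneg one_pos (mul_self_nonneg (c z.re))).ne'
  unfold CP Ffun
  rw [wzb_exp_I_im, wzb_mul_exp_I_im hc.ofReal_comp]
  simp only [map_mul, conj_ofReal, normSq_ofReal, normSq_exp_I_mul, mul_one,
    exp_I_mul_mul_conj, conj_exp_I_mul_mul]
  push_cast
  rw [show ((c z.re : ℂ) - (1 + (c z.re : ℂ) ^ 2) / 2 - c z.re) / 2 * exp (I * z.im)
      = (1 + c z.re * c z.re) * (-exp (I * z.im) / 4) by ring,
    mul_comm (1 - (c z.re : ℂ)) (1 + c z.re * c z.re), mul_div_mul_left _ _ hpos, ← div_div]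
  ring

lemma Ge1_exp_I_im {g₂ : ℂ → ℂ} {z : ℂ} {c : ℝ} (hc : c ≠ 1)
    (hg₂ : g₂ z = c * exp (I * z.im)) : Ge1 (fun w => exp (I * w.im)) g₂ z := by
  have hc' : (1 : ℂ) - c ≠ 0 := sub_ne_zero.mpr (by exact_mod_cast hc.symm)
  have hee : exp (I * z.im) * conj (exp (I * z.im)) = 1 := by
    rw [mul_conj, normSq_exp_I_mul, ofReal_one]
  unfold Ge1
  rw [hg₂, wz_wzb_exp_I_im, wz_exp_I_im, wzb_exp_I_im]
  simp only [map_mul, conj_ofReal, normSq_div, normSq_neg, normSq_exp_I_mul, normSq_ofNat,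
    exp_I_mul_mul_conj, conj_exp_I_mul_mul]
  push_cast
  field_simp
  linear_combination 4 * exp (I * z.im) * (3 * c - 1) * hee

/-- **(Example: the Hamiltonian stationary Lagrangian translator).** On the domain
`Ω = {u + iv : u > 1}`, the pair `g₁ = e^{iv}`, `g₂ = ((u+1)/(u−1))e^{iv}` satisfies the
compatibility condition (CP) and the integrability condition (Ge1); in particular
`𝒢(u) = (u+1)/(u−1)` solves the ODE `1/2 = (𝒢 − 𝒢′)/(1 + 𝒢²)` for `u > 1`. -/
theorem castro_lerma_gauss_map :
    (∀ z ∈ {w : ℂ | 1 < w.re},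
      CP (fun w => Complex.exp (Complex.I * (w.im : ℂ)))
        (fun w => (((w.re + 1) / (w.re - 1) : ℝ) : ℂ) * Complex.exp (Complex.I * (w.im : ℂ))) z
      ∧ Ge1 (fun w => Complex.exp (Complex.I * (w.im : ℂ)))
        (fun w => (((w.re + 1) / (w.re - 1) : ℝ) : ℂ) * Complex.exp (Complex.I * (w.im : ℂ))) z)
    ∧ (∀ u : ℝ, 1 < u →
        (1 / 2 : ℝ)
          = ((fun t : ℝ => (t + 1) / (t - 1)) u - deriv (fun t : ℝ => (t + 1) / (t - 1)) u)
            / (1 + ((fun t : ℝ => (t + 1) / (t - 1)) u) ^ 2)) := by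
  refine ⟨fun z (hz : 1 < z.re) => ⟨?_, ?_⟩, fun u hu => ?_⟩
  · exact CP_exp_I_im_of_hasDerivAt (c := fun t => (t + 1) / (t - 1))
      (hasDerivAt_add_one_div_sub_one hz.ne')
  · refine Ge1_exp_I_im (c := (z.re + 1) / (z.re - 1)) ?_ rfl
    rw [Ne, div_eq_one_iff_eq (sub_ne_zero.mpr hz.ne')]
    linarith
  · have hpos : 0 < 1 + ((u + 1) / (u - 1)) ^ 2 := by positivity
    rw [(hasDerivAt_add_one_div_sub_one hu.ne').deriv]
    field_simp
    ring
end
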